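/- The subtype relation ≤ on union-intersection types coincides with the structural relation ≤₂ defined by: ⋃_{i∈I} S_i ≤₂ ⋃_{j∈J} S'_j iff there is a function f : I → J with S_i ≤₂ S'_{f(i)} for all i; ⋂_{i∈I} R_i ≤₂ ⋂_{j∈J} R'_j iff there is a function f : J → I with R_{f(j)} ≤₂ R'_j for all j; α ≤₂ α for atomic α; and S→T ≤₂ S'→T' iff S' ≤₂ S and T ≤₂ T'. -/

import Mathlib

/-! ## Union-intersection types -/

mutual
/-- Raw types `R ::= α | S → T`. -/
inductive RawTy : Type
  | atom : ℕ → RawTy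
  | arrow : STy → TTy → RawTy
/-- Subsidiary types: finite formal intersections of raw types
    (the empty intersection is ω). -/
inductive STy : Type
  | inter : List RawTy → STy
/-- Types: finite formal unions of subsidiary types
    (the empty union is Ʊ). -/
inductive TTy : Type
  | union : List STy → TTy
end

/-- A subsidiary type regarded as a type (a singleton union). -/
def STy.toT (S : STy) : TTy := .union [S]
/-- A raw type regarded as a subsidiary type (a singleton intersection). -/
def RawTy.toS (R : RawTy) : STy := .inter [R]

/-- ω, the empty intersection. -/
def STy.omega : STy := .inter []
/-- Ʊ, the empty union. -/
def TTy.agemo : TTy := .union []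

mutual
/-- The subtype relation on raw types. -/
inductive SubR : RawTy → RawTy → Prop
  | atom (a : ℕ) : SubR (.atom a) (.atom a)
  | arrow {S S' T T'} : SubS S' S → SubT T T' → SubR (.arrow S T) (.arrow S' T')
/-- The subtype relation on subsidiary types.  Intersections are taken up to
    associativity and commutativity; `weaken` is the projection rule
    `S ≤ S' ⟹ S ∩ S'' ≤ S'` and `pair` the pairing rule. -/
inductive SubS : STy → STy → Prop
  | ofRaw {R R'} : SubR R R' → SubS (.inter [R]) (.inter [R'])
  | weaken {l l' : List RawTy} {S'} : SubS (.inter l) S' → l.Subperm l' →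
      SubS (.inter l') S'
  | pair {S} {l' : List RawTy} : (∀ R' ∈ l', SubS S (.inter [R'])) →
      SubS S (.inter l')
/-- The subtype relation on types.  `widen` is the injection rule
    `T ≤ T' ⟹ T ≤ T'' ∪ T'` and `copair` the copairing rule. -/
inductive SubT : TTy → TTy → Prop
  | ofS {S S'} : SubS S S' → SubT (.union [S]) (.union [S'])
  | widen {T} {l l' : List STy} : SubT T (.union l) → l.Subperm l' →
      SubT T (.union l')
  | copair {l : List STy} {T} : (∀ S ∈ l, SubT (.union [S]) T) →
      SubT (.union l) T
end

mutual
/-- The structural relation ≤₂ on raw types. -/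
inductive Sub2R : RawTy → RawTy → Prop
  | atom (a : ℕ) : Sub2R (.atom a) (.atom a)
  | arrow {S S' T T'} : Sub2S S' S → Sub2T T T' → Sub2R (.arrow S T) (.arrow S' T')
/-- ≤₂ on subsidiary types: ⋂_{i∈I} R_i ≤₂ ⋂_{j∈J} R'_j iff there is
    f : J → I with R_{f(j)} ≤₂ R'_j for all j. -/
inductive Sub2S : STy → STy → Prop
  | intro {l l' : List RawTy} (f : Fin l'.length → Fin l.length)
      (h : ∀ j : Fin l'.length, Sub2R (l.get (f j)) (l'.get j)) :
      Sub2S (.inter l) (.inter l')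
/-- ≤₂ on types: ⋃_{i∈I} S_i ≤₂ ⋃_{j∈J} S'_j iff there is f : I → J with
    S_i ≤₂ S'_{f(i)} for all i. -/
inductive Sub2T : TTy → TTy → Prop
  | intro {l l' : List STy} (f : Fin l.length → Fin l'.length)
      (h : ∀ i : Fin l.length, Sub2S (l.get i) (l'.get (f i))) :
      Sub2T (.union l) (.union l')
end

/-!
Unfolding the index functions, `⋂ l ≤₂ ⋂ l'` says that every member of `l'` lies above some
member of `l`, and `⋃ m ≤₂ ⋃ m'` that every member of `m` lies below some member of `m'`. In this
form `≤₂` is visibly closed under each rule generating `≤`; conversely such a domination is derived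
in `≤` by a projection (injection) for each member followed by one pairing (copairing). Both
directions are then mutual inductions on derivations.
-/

section

variable {l l' : List RawTy} {m m' : List STy}

theorem sub2S_inter_iff :
    Sub2S (.inter l) (.inter l') ↔ ∀ R' ∈ l', ∃ R ∈ l, Sub2R R R' := by
  constructor
  · rintro ⟨f, h⟩ R' hR'
    obtain ⟨j, rfl⟩ := List.get_of_mem hR'
    exact ⟨_, l.get_mem (f j), h j⟩
  · intro h
    have : ∀ j, ∃ i, Sub2R (l.get i) (l'.get j) := fun j => by
      obtain ⟨R, hR, hRR'⟩ := h _ (l'.get_mem j)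
      obtain ⟨i, rfl⟩ := List.get_of_mem hR
      exact ⟨i, hRR'⟩
    choose f hf using this
    exact ⟨f, hf⟩

theorem sub2T_union_iff :
    Sub2T (.union m) (.union m') ↔ ∀ S ∈ m, ∃ S' ∈ m', Sub2S S S' := by
  constructor
  · rintro ⟨f, h⟩ S hS
    obtain ⟨i, rfl⟩ := List.get_of_mem hS
    exact ⟨_, m'.get_mem (f i), h i⟩
  · intro h
    have : ∀ i, ∃ j, Sub2S (m.get i) (m'.get j) := fun i => by
      obtain ⟨S', hS', hSS'⟩ := h _ (m.get_mem i)
      obtain ⟨j, rfl⟩ := List.get_of_mem hS'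
      exact ⟨j, hSS'⟩
    choose f hf using this
    exact ⟨f, hf⟩

theorem sub2S_singleton_left_iff {R : RawTy} :
    Sub2S (.inter [R]) (.inter l') ↔ ∀ R' ∈ l', Sub2R R R' := by
  simp [sub2S_inter_iff]

theorem sub2T_singleton_right_iff {S' : STy} :
    Sub2T (.union m) (.union [S']) ↔ ∀ S ∈ m, Sub2S S S' := by
  simp [sub2T_union_iff]

theorem Sub2S.ofRaw {R R' : RawTy} (h : Sub2R R R') : Sub2S (.inter [R]) (.inter [R']) :=
  sub2S_singleton_left_iff.mpr (by simpa using h)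

theorem Sub2T.ofS {S S' : STy} (h : Sub2S S S') : Sub2T (.union [S]) (.union [S']) :=
  sub2T_singleton_right_iff.mpr (by simpa using h)

theorem Sub2S.weaken {S' : STy} (h : Sub2S (.inter l) S') (hl : l.Subperm l') :
    Sub2S (.inter l') S' := by
  obtain ⟨k⟩ := S'
  rw [sub2S_inter_iff] at h ⊢
  intro R' hR'
  obtain ⟨R, hR, hRR'⟩ := h R' hR'
  exact ⟨R, hl.subset hR, hRR'⟩

theorem Sub2T.widen {T : TTy} (h : Sub2T T (.union m)) (hm : m.Subperm m') :
    Sub2T T (.union m') := by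
  obtain ⟨k⟩ := T
  rw [sub2T_union_iff] at h ⊢
  intro S hS
  obtain ⟨S', hS', hSS'⟩ := h S hS
  exact ⟨S', hm.subset hS', hSS'⟩

theorem Sub2S.pair {S : STy} (h : ∀ R' ∈ l', Sub2S S (.inter [R'])) : Sub2S S (.inter l') := by
  obtain ⟨k⟩ := S
  rw [sub2S_inter_iff]
  intro R' hR'
  simpa [sub2S_inter_iff] using h R' hR'

theorem Sub2T.copair {T : TTy} (h : ∀ S ∈ m, Sub2T (.union [S]) T) : Sub2T (.union m) T := by
  obtain ⟨k⟩ := T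
  rw [sub2T_union_iff]
  intro S hS
  simpa [sub2T_union_iff] using h S hS

theorem SubS.inter_of_forall_exists (h : ∀ R' ∈ l', ∃ R ∈ l, SubR R R') :
    SubS (.inter l) (.inter l') :=
  .pair fun R' hR' =>
    let ⟨_, hR, hRR'⟩ := h R' hR'
    .weaken (.ofRaw hRR') (List.singleton_sublist.mpr hR).subperm

theorem SubT.union_of_forall_exists (h : ∀ S ∈ m, ∃ S' ∈ m', SubS S S') :
    SubT (.union m) (.union m') :=
  .copair fun S hS =>
    let ⟨_, hS', hSS'⟩ := h S hS
    .widen (.ofS hSS') (List.singleton_sublist.mpr hS').subperm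

end

mutual
theorem SubR.sub2R {R R' : RawTy} : SubR R R' → Sub2R R R'
  | .atom a => .atom a
  | .arrow hS hT => .arrow hS.sub2S hT.sub2T
theorem SubS.sub2S {S S' : STy} : SubS S S' → Sub2S S S'
  | .ofRaw h => .ofRaw h.sub2R
  | .weaken h hl => .weaken h.sub2S hl
  | .pair h => .pair fun R' hR' => (h R' hR').sub2S
theorem SubT.sub2T {T T' : TTy} : SubT T T' → Sub2T T T'
  | .ofS h => .ofS h.sub2S
  | .widen h hm => .widen h.sub2T hm
  | .copair h => .copair fun S hS => (h S hS).sub2T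
end

mutual
theorem Sub2R.subR {R R' : RawTy} : Sub2R R R' → SubR R R'
  | .atom a => .atom a
  | .arrow hS hT => .arrow hS.subS hT.subT
theorem Sub2S.subS {S S' : STy} : Sub2S S S' → SubS S S'
  | .intro f h => .inter_of_forall_exists fun R' hR' => by
      obtain ⟨j, rfl⟩ := List.get_of_mem hR'
      exact ⟨_, List.get_mem _ (f j), (h j).subR⟩
theorem Sub2T.subT {T T' : TTy} : Sub2T T T' → SubT T T'
  | .intro f h => .union_of_forall_exists fun S hS => by
      obtain ⟨i, rfl⟩ := List.get_of_mem hS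
      exact ⟨_, List.get_mem _ (f i), (h i).subS⟩
end

/-- The subtype relation ≤ coincides with the structural
relation ≤₂, at all three levels. -/
theorem sub_eq_sub2 :
    (∀ T T' : TTy, SubT T T' ↔ Sub2T T T') ∧
    (∀ S S' : STy, SubS S S' ↔ Sub2S S S') ∧
    (∀ R R' : RawTy, SubR R R' ↔ Sub2R R R') :=
  ⟨fun _ _ => ⟨SubT.sub2T, Sub2T.subT⟩, fun _ _ => ⟨SubS.sub2S, Sub2S.subS⟩,
    fun _ _ => ⟨SubR.sub2R, Sub2R.subR⟩⟩
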